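/- For every z in the open unit disk with Im z > 0, one has Im G(z) > 0, where G(z) = 3 Log(1+z) − Log(1 + z e^{2iφ}) and φ = Arg(3+z). -/

import Mathlib

open Real Complex

noncomputable def G (z : ℂ) : ℂ :=
  3 * Complex.log (1 + z) - Complex.log (1 + z * Complex.exp (2 * (3 + z).arg * Complex.I))

lemma arg_eq_arctan' {u : ℂ} (h : 0 < u.re) : u.arg = Real.arctan (u.im / u.re) := by
  have h1 : |u.arg| < π / 2 := Complex.abs_arg_lt_pi_div_two_iff.mpr (Or.inl h)
  rw [abs_lt] at h1
  rw [← Complex.tan_arg, Real.arctan_tan (by linarith [h1.1]) h1.2]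

theorem ImG_pos : ∀ z : ℂ, ‖z‖ < 1 → 0 < z.im → 0 < (G z).im := by
  intro z hz hy
  have hx1 : |z.re| < 1 := lt_of_le_of_lt (Complex.abs_re_le_norm z) hz
  rw [abs_lt] at hx1
  set x := z.re with hxdef
  set y := z.im with hydef
  set a := (1 + z).arg with ha
  set f := (3 + z).arg with hf
  have hre1 : (1 + z).re = 1 + x := by simp [hxdef]
  have him1 : (1 + z).im = y := by simp [hydef]
  have hre3 : (3 + z).re = 3 + x := by simp [hxdef]
  have him3 : (3 + z).im = y := by simp [hydef]
  have hre1pos : 0 < (1 + z).re := by rw [hre1]; linarith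
  have hre3pos : 0 < (3 + z).re := by rw [hre3]; linarith
  -- a and f as arctan
  have haa : a = Real.arctan (y / (1 + x)) := by
    rw [ha, arg_eq_arctan' hre1pos, hre1, him1]
  have hff : f = Real.arctan (y / (3 + x)) := by
    rw [hf, arg_eq_arctan' hre3pos, hre3, him3]
  have hfpos : 0 < f := by
    rw [hff, ← Real.arctan_zero]
    exact Real.arctan_strictMono (by positivity)
  have hfa : f < a := by
    rw [haa, hff]
    apply Real.arctan_strictMono
    apply div_lt_div_of_pos_left hy (by linarith) (by linarith)
  have hapos : 0 < a := hfpos.trans hfa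
  have hapi : a < π / 2 := by
    rw [haa]; exact Real.arctan_lt_pi_div_two _
  -- the rotated point
  set E := Complex.exp (2 * (f : ℂ) * Complex.I) with hE
  set w := 1 + z * E with hw
  have hGim : (G z).im = 3 * a - w.arg := by
    simp [G, Complex.log_im, ← ha, ← hf, ← hE, ← hw]
  rw [hGim]
  -- coordinates of E
  have hEre : E.re = Real.cos (2 * f) := by
    rw [hE]
    rw [show (2 : ℂ) * (f : ℂ) * Complex.I = ((2 * f : ℝ) : ℂ) * Complex.I by push_cast; ring]
    exact Complex.exp_ofReal_mul_I_re _
  have hEim : E.im = Real.sin (2 * f) := by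
    rw [hE]
    rw [show (2 : ℂ) * (f : ℂ) * Complex.I = ((2 * f : ℝ) : ℂ) * Complex.I by push_cast; ring]
    exact Complex.exp_ofReal_mul_I_im _
  have hwre : w.re = 1 + (x * Real.cos (2 * f) - y * Real.sin (2 * f)) := by
    simp [hw, Complex.add_re, Complex.mul_re, hEre, hEim, hxdef, hydef]
  have hwim : w.im = x * Real.sin (2 * f) + y * Real.cos (2 * f) := by
    simp [hw, Complex.add_im, Complex.mul_im, hEre, hEim, hxdef, hydef]
  have habsE : ‖E‖ = 1 := by
    rw [hE, Complex.norm_exp]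
    simp
  have hwrepos : 0 < w.re := by
    have h1 : |(z * E).re| ≤ ‖z * E‖ := Complex.abs_re_le_norm _
    have h2 : ‖z * E‖ = ‖z‖ := by rw [norm_mul, habsE, mul_one]
    rw [h2] at h1
    rw [abs_le] at h1
    have : w.re = 1 + (z * E).re := by simp [hw]
    rw [this]; linarith
  have hargw : w.arg = Real.arctan (w.im / w.re) := arg_eq_arctan' hwrepos
  have hargwlt : w.arg < π / 2 := by rw [hargw]; exact Real.arctan_lt_pi_div_two _
  -- case split on a + 2f vs π/2
  rcases le_or_gt (π / 2) (a + 2 * f) with hb | hb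
  · have : a + 2 * f < 3 * a := by linarith
    linarith
  · -- key trigonometric inequality
    have h1z : (1 : ℂ) + z ≠ 0 := by
      intro h
      rw [h] at hre1pos
      simp at hre1pos
    have hcosa : Real.cos a = (1 + x) / ‖1 + z‖ := by
      rw [ha, Complex.cos_arg h1z, hre1]
    have hsina : Real.sin a = y / ‖1 + z‖ := by
      rw [ha, Complex.sin_arg, him1]
    have habs1pos : 0 < ‖1 + z‖ := by
      simp [h1z]
    have hkey : y * Real.cos a = (1 + x) * Real.sin a := by
      rw [hcosa, hsina]; field_simp
    have hsinlt : Real.sin a < Real.sin (a + 2 * f) := by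
      apply Real.strictMonoOn_sin ⟨by linarith, by linarith⟩ ⟨by linarith, by linarith⟩
      linarith
    have hcosb : 0 < Real.cos (a + 2 * f) := by
      apply Real.cos_pos_of_mem_Ioo ⟨by linarith, hb⟩
    have hcross : w.im * Real.cos (a + 2 * f) < w.re * Real.sin (a + 2 * f) := by
      have expand : w.im * Real.cos (a + 2 * f) - w.re * Real.sin (a + 2 * f)
          = Real.sin a - Real.sin (a + 2 * f) := by
        rw [hwim, hwre, Real.cos_add, Real.sin_add]
        have hpy : Real.sin (2 * f) ^ 2 + Real.cos (2 * f) ^ 2 = 1 :=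
          Real.sin_sq_add_cos_sq _
        linear_combination (y * Real.cos a - x * Real.sin a) * hpy + hkey
      linarith
    have hq : w.im / w.re < Real.tan (a + 2 * f) := by
      rw [Real.tan_eq_sin_div_cos]
      rw [div_lt_div_iff₀ hwrepos hcosb]
      linarith
    have : w.arg < a + 2 * f := by
      rw [hargw]
      calc Real.arctan (w.im / w.re) < Real.arctan (Real.tan (a + 2 * f)) :=
            Real.arctan_strictMono hq
        _ = a + 2 * f := Real.arctan_tan (by linarith) hb
    linarith
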